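/- For every finite word w over {0,1,2} and every j in {0,1,2}, one has 0 <= b_j^(w) <= 2/3. Moreover, the infimum of the set { b_j^(w) : w a finite word over {0,1,2}, j in {0,1,2} } equals 0 and its supremum equals 2/3. -/

import Mathlib

open Matrix BigOperators

/-- The matrix `M_0`. -/
noncomputable def M0 : Matrix (Fin 3) (Fin 3) ℝ :=
  (1 / 15 : ℝ) • !![9, 0, 0; 2, 2, -1; 2, -1, 2]

/-- The matrix `M_1`. -/
noncomputable def M1 : Matrix (Fin 3) (Fin 3) ℝ :=
  (1 / 15 : ℝ) • !![2, 2, -1; 0, 9, 0; -1, 2, 2]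

/-- The matrix `M_2`. -/
noncomputable def M2 : Matrix (Fin 3) (Fin 3) ℝ :=
  (1 / 15 : ℝ) • !![2, -1, 2; -1, 2, 2; 0, 0, 9]

/-- `Mmat i` is the matrix `M_i`. -/
noncomputable def Mmat : Fin 3 → Matrix (Fin 3) (Fin 3) ℝ := ![M0, M1, M2]

/-- For a word `w = [w₁, ..., wₘ]`, `Mword w = M_{w₁} * ⋯ * M_{wₘ}`
(the empty word giving the identity matrix). -/
noncomputable def Mword (w : List (Fin 3)) : Matrix (Fin 3) (Fin 3) ℝ :=
  (w.map Mmat).prod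

/-- The `j`-th column `z_j` of `M_w`, as a vector in `ℝ³`. -/
noncomputable def zcol (w : List (Fin 3)) (j : Fin 3) : Fin 3 → ℝ :=
  fun i => Mword w i j

/-- The vector `z = z₀ + z₁ + z₂`, the sum of the columns of `M_w`. -/
noncomputable def zvec (w : List (Fin 3)) : Fin 3 → ℝ :=
  fun i => ∑ j : Fin 3, Mword w i j

/-- `c_j^(w)`, the `j`-th column sum of `M_w`, i.e. the `j`-th entry of `(1,1,1) M_w`. -/
noncomputable def cw (w : List (Fin 3)) (j : Fin 3) : ℝ :=
  ∑ i : Fin 3, Mword w i j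

/-- `S^(w) = c₀^(w) + c₁^(w) + c₂^(w)`, the sum of all entries of `M_w`. -/
noncomputable def Sw (w : List (Fin 3)) : ℝ :=
  ∑ j : Fin 3, cw w j

/-- The weight `b_j^(w) = 1/6 + c_j^(w) / (2 S^(w))`. -/
noncomputable def bwt (w : List (Fin 3)) (j : Fin 3) : ℝ :=
  1 / 6 + cw w j / (2 * Sw w)

/-! The column-sum vector `c = (1,1,1) M_w` stays in the cone `S ≥ 0`,
`c₀c₁ + c₁c₂ + c₂c₀ ≥ 0`, on which every coordinate lies between `-S/3` and `S`; this is
exactly `0 ≤ b_j ≤ 2/3`. Right multiplication by `M_i` divides `c₀c₁ + c₁c₂ + c₂c₀` by `25`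
and sends `S` to `(S + 2cᵢ)/5`, so the cone is invariant. Along the words `0ᵐ` and `0ᵐ1` the
weights `b₀ = 2/3 - 2/(3·9ᵐ + 3)` and `b₂ = 2/(3·9ᵐ + 7)` tend to the two bounds. -/

open Filter Topology

-- `c` lies in this cone iff `P = [[c₀ + c₂, c₂], [c₂, c₁ + c₂]]` is positive semidefinite, and
-- each `M_i` acts on `P` by a congruence `P ↦ A P Aᵀ / 15` with `det A = 3`; hence the factor
-- `1/25` on `det P = c₀c₁ + c₁c₂ + c₂c₀`.
def energyCone : Set (Fin 3 → ℝ) :=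
  {c | 0 ≤ ∑ i, c i ∧ 0 ≤ c 0 * c 1 + c 1 * c 2 + c 2 * c 0}

lemma neg_third_le_and_le_add_add {a b c : ℝ} (hS : 0 ≤ a + b + c)
    (hσ : 0 ≤ a * b + b * c + c * a) :
    -(a + b + c) / 3 ≤ a ∧ a ≤ a + b + c := by
  constructor <;> nlinarith [sq_nonneg (b - c), sq_nonneg (b + c)]

lemma bounds_of_mem_energyCone {c : Fin 3 → ℝ} (hc : c ∈ energyCone) (j : Fin 3) :
    -(∑ i, c i) / 3 ≤ c j ∧ c j ≤ ∑ i, c i := by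
  obtain ⟨hS, hσ⟩ := hc
  rw [Fin.sum_univ_three] at hS ⊢
  fin_cases j
  · exact neg_third_le_and_le_add_add hS hσ
  · show -(c 0 + c 1 + c 2) / 3 ≤ c 1 ∧ c 1 ≤ c 0 + c 1 + c 2
    have := neg_third_le_and_le_add_add (a := c 1) (b := c 2) (c := c 0) (by linarith) (by linarith)
    constructor <;> linarith
  · show -(c 0 + c 1 + c 2) / 3 ≤ c 2 ∧ c 2 ≤ c 0 + c 1 + c 2
    have := neg_third_le_and_le_add_add (a := c 2) (b := c 0) (c := c 1) (by linarith) (by linarith)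
    constructor <;> linarith

lemma sum_vecMul_Mmat (c : Fin 3 → ℝ) (i : Fin 3) :
    ∑ k, (c ᵥ* Mmat i) k = (∑ k, c k + 2 * c i) / 5 := by
  fin_cases i <;>
  · simp [Mmat, M0, M1, M2, vecMul, dotProduct, Fin.sum_univ_three]
    ring

lemma esymm_vecMul_Mmat (c : Fin 3 → ℝ) (i : Fin 3) :
    let d := c ᵥ* Mmat i
    d 0 * d 1 + d 1 * d 2 + d 2 * d 0 = (c 0 * c 1 + c 1 * c 2 + c 2 * c 0) / 25 := by
  fin_cases i <;>
  · simp [Mmat, M0, M1, M2, vecMul, dotProduct, Fin.sum_univ_three]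
    ring

lemma vecMul_Mmat_mem_energyCone {c : Fin 3 → ℝ} (hc : c ∈ energyCone) (i : Fin 3) :
    c ᵥ* Mmat i ∈ energyCone := by
  have hci := (bounds_of_mem_energyCone hc i).1
  refine ⟨?_, ?_⟩
  · rw [sum_vecMul_Mmat]
    linarith [hc.1]
  · rw [esymm_vecMul_Mmat]
    exact div_nonneg hc.2 (by norm_num)

lemma cw_eq_vecMul (w : List (Fin 3)) : cw w = (fun _ => 1) ᵥ* Mword w := by
  ext j
  simp [cw, vecMul, dotProduct]

lemma cw_append_singleton (w : List (Fin 3)) (i : Fin 3) :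
    cw (w ++ [i]) = cw w ᵥ* Mmat i := by
  simp [cw_eq_vecMul, Mword, vecMul_vecMul]

lemma cw_mem_energyCone (w : List (Fin 3)) : cw w ∈ energyCone := by
  induction w using List.reverseRecOn with
  | nil => norm_num [energyCone, cw, Mword, Fin.sum_univ_three, one_apply]
  | append_singleton w i ih =>
    rw [cw_append_singleton]
    exact vecMul_Mmat_mem_energyCone ih i

lemma one_sixth_add_div_mem_Icc {c S : ℝ} (hlow : -S / 3 ≤ c) (hup : c ≤ S) :
    1 / 6 + c / (2 * S) ∈ Set.Icc (0 : ℝ) (2 / 3) := by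
  rcases (show 0 ≤ S by linarith).eq_or_lt with hS | hS
  · norm_num [← hS]
  · rw [Set.mem_Icc, ← sub_nonneg, ← sub_nonneg (b := 1 / 6 + _)]
    constructor
    · field_simp
      linarith
    · field_simp
      linarith

lemma bwt_mem_Icc (w : List (Fin 3)) (j : Fin 3) : bwt w j ∈ Set.Icc (0 : ℝ) (2 / 3) := by
  obtain ⟨hlow, hup⟩ := bounds_of_mem_energyCone (cw_mem_energyCone w) j
  exact one_sixth_add_div_mem_Icc hlow hup

lemma bwt_eq_of_cw_eq_smul {w : List (Fin 3)} {t : ℝ} (ht : t ≠ 0) {v : Fin 3 → ℝ}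
    (h : cw w = t • v) (j : Fin 3) : bwt w j = 1 / 6 + v j / (2 * ∑ k, v k) := by
  have hS : Sw w = t * ∑ k, v k := by simp [Sw, h, Finset.mul_sum]
  rw [bwt, hS, h, Pi.smul_apply, smul_eq_mul, mul_left_comm, mul_div_mul_left _ _ ht]

lemma cw_replicate_zero (m : ℕ) :
    cw (List.replicate m 0) = (15 ^ m : ℝ)⁻¹ • ![(3 * 9 ^ m - 1) / 2, 1, 1] := by
  induction m with
  | zero =>
    ext j
    fin_cases j <;> norm_num [cw, Mword, one_apply]
  | succ m ih =>
    rw [List.replicate_succ', cw_append_singleton, ih]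
    ext j
    fin_cases j <;>
    · simp [Mmat, M0, vecMul, dotProduct, Fin.sum_univ_three, pow_succ]
      field_simp
      ring

lemma cw_replicate_zero_append_one (m : ℕ) :
    cw (List.replicate m 0 ++ [1]) =
      (15 ^ (m + 1) : ℝ)⁻¹ • ![3 * 9 ^ m - 2, 3 * 9 ^ m + 10, (5 - 3 * 9 ^ m) / 2] := by
  rw [cw_append_singleton, cw_replicate_zero]
  ext j
  fin_cases j <;>
  · simp [Mmat, M1, vecMul, dotProduct, Fin.sum_univ_three, pow_succ]
    field_simp
    ring

lemma bwt_replicate_zero (m : ℕ) :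
    bwt (List.replicate m 0) 0 = 2 / 3 - 2 / (3 * 9 ^ m + 3) := by
  rw [bwt_eq_of_cw_eq_smul (by positivity) (cw_replicate_zero m)]
  simp only [Fin.sum_univ_three, cons_val_zero, cons_val_one, cons_val_two, tail_cons, head_cons]
  rw [show 2 * ((3 * 9 ^ m - 1) / 2 + 1 + 1 : ℝ) = 3 * 9 ^ m + 3 by ring]
  field_simp
  ring

lemma bwt_replicate_zero_append_one (m : ℕ) :
    bwt (List.replicate m 0 ++ [1]) 2 = 2 / (3 * 9 ^ m + 7) := by
  rw [bwt_eq_of_cw_eq_smul (by positivity) (cw_replicate_zero_append_one m)]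
  simp only [Fin.sum_univ_three, cons_val_zero, cons_val_one, cons_val_two, tail_cons, head_cons]
  rw [show 2 * (3 * 9 ^ m - 2 + (3 * 9 ^ m + 10) + (5 - 3 * 9 ^ m) / 2 : ℝ) = 9 * 9 ^ m + 21 by ring]
  field_simp
  ring

lemma tendsto_three_mul_nine_pow_add_atTop (a : ℝ) :
    Tendsto (fun m : ℕ ↦ 3 * (9 : ℝ) ^ m + a) atTop atTop :=
  tendsto_atTop_add_const_right _ a <|
    (tendsto_pow_atTop_atTop_of_one_lt (by norm_num)).const_mul_atTop (by norm_num)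

lemma tendsto_bwt_replicate_zero :
    Tendsto (fun m ↦ bwt (List.replicate m 0) 0) atTop (𝓝 (2 / 3)) := by
  simp_rw [bwt_replicate_zero]
  simpa using tendsto_const_nhds.sub
    (tendsto_const_nhds.div_atTop (tendsto_three_mul_nine_pow_add_atTop 3))

lemma tendsto_bwt_replicate_zero_append_one :
    Tendsto (fun m ↦ bwt (List.replicate m 0 ++ [1]) 2) atTop (𝓝 0) := by
  simp_rw [bwt_replicate_zero_append_one]
  exact tendsto_const_nhds.div_atTop (tendsto_three_mul_nine_pow_add_atTop 7)

/-- Every weight satisfies `0 ≤ b_j^(w) ≤ 2/3`; moreover the infimum of the set of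
all weights is `0` and its supremum is `2/3`. -/
theorem stmt_14 :
    (∀ (w : List (Fin 3)) (j : Fin 3), 0 ≤ bwt w j ∧ bwt w j ≤ 2 / 3) ∧
    sInf {x : ℝ | ∃ (w : List (Fin 3)) (j : Fin 3), bwt w j = x} = 0 ∧
    sSup {x : ℝ | ∃ (w : List (Fin 3)) (j : Fin 3), bwt w j = x} = 2 / 3 := by
  set weights := {x : ℝ | ∃ (w : List (Fin 3)) (j : Fin 3), bwt w j = x}
  have hne : weights.Nonempty := ⟨_, [], 0, rfl⟩
  have hmem : ∀ w j, bwt w j ∈ weights := fun w j ↦ ⟨w, j, rfl⟩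
  refine ⟨bwt_mem_Icc, ?_, ?_⟩
  · refine (isGLB_of_mem_closure ?_ ?_).csInf_eq hne
    · rintro _ ⟨w, j, rfl⟩
      exact (bwt_mem_Icc w j).1
    · exact mem_closure_of_tendsto tendsto_bwt_replicate_zero_append_one
        (Eventually.of_forall fun _ ↦ hmem _ _)
  · refine (isLUB_of_mem_closure ?_ ?_).csSup_eq hne
    · rintro _ ⟨w, j, rfl⟩
      exact (bwt_mem_Icc w j).2
    · exact mem_closure_of_tendsto tendsto_bwt_replicate_zero
        (Eventually.of_forall fun _ ↦ hmem _ _)
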